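/- arXiv:2012.07607 — 2 statements merged into one kernel-verified Lean document; each statement's English description precedes it below -/
import Mathlib

section
/- Let ρ : ℝ≥0 → ℝ≥0 be continuous and positive definite, and let f : ℝ≥0 → ℝ≥0 be bounded and quasi-uniformly continuous with ∫₀^∞ ρ(f(t)) dt < ∞. Then f(t) → 0 as t → ∞. -/
open MeasureTheory Filter Set Topology

/-! If `f t ≥ ε` at arbitrarily late times `t`, quasi-uniform continuity keeps `f` in `[ε/2, C]`
on a window `[t - δ, t]` of fixed length, where `ρ ≥ c > 0` by compactness. Hence the integral of
`ρ ∘ f` over that window is at least `c δ`, whereas such window integrals of an integrable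
function tend to `0`, being differences of two convergent primitives. -/

theorem tendsto_intervalIntegral_sub_atTop {E : Type*} [NormedAddCommGroup E] [NormedSpace ℝ E]
    [CompleteSpace E] {g : ℝ → E} {a : ℝ} (hg : IntegrableOn g (Ioi a)) (δ : ℝ) :
    Tendsto (fun t => ∫ x in (t - δ)..t, g x) atTop (𝓝 0) := by
  have hF := intervalIntegral_tendsto_integral_Ioi a hg tendsto_id
  have hF' := hF.comp (tendsto_atTop_add_const_right _ (-δ) tendsto_id)
  have hdiff := hF.sub hF'
  rw [sub_self] at hdiff
  refine hdiff.congr' ?_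
  filter_upwards [eventually_ge_atTop (max a (a + δ))] with t ht
  have hat : a ≤ t := le_of_max_le_left ht
  have hatδ : a ≤ t - δ := by linarith [le_of_max_le_right ht]
  have hgab : ∀ b, a ≤ b → IntervalIntegrable g volume a b := fun b hb =>
    (intervalIntegrable_iff_integrableOn_Ioc_of_le hb).2 (hg.mono_set Ioc_subset_Ioi_self)
  simpa [sub_eq_add_neg] using intervalIntegral.integral_interval_sub_left (hgab t hat) (hgab _ hatδ)

theorem mul_sub_le_intervalIntegral {g : ℝ → ℝ} {a b c : ℝ} (hab : a ≤ b)
    (hg : IntervalIntegrable g volume a b) (hc : ∀ x ∈ Icc a b, c ≤ g x) :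
    c * (b - a) ≤ ∫ x in a..b, g x := by
  calc c * (b - a) = ∫ _ in a..b, c := by simp [mul_comm]
    _ ≤ ∫ x in a..b, g x := intervalIntegral.integral_mono_on hab intervalIntegrable_const hg hc

theorem eventually_lt_of_integrableOn_comp (ρ f : ℝ → ℝ) {C : ℝ}
    (hρc : ContinuousOn ρ (Ici 0)) (hρpos : ∀ s > (0:ℝ), 0 < ρ s)
    (hfbdd : ∀ t ≥ (0:ℝ), f t ≤ C)
    (hquc : ∀ ε > (0:ℝ), ∃ δ > (0:ℝ), ∀ t₀ t : ℝ, 0 ≤ t₀ → t₀ ≤ t → t ≤ t₀ + δ →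
      f t - f t₀ < ε)
    (hint : IntegrableOn (fun t => ρ (f t)) (Ici 0)) {ε : ℝ} (hε : 0 < ε) :
    ∀ᶠ t in atTop, f t < ε := by
  obtain ⟨δ, hδ, hδf⟩ := hquc (ε / 2) (half_pos hε)
  have hK : Icc (ε / 2) C ⊆ Ici 0 := fun s hs => (half_pos hε).le.trans hs.1
  obtain ⟨c, hc, hcρ⟩ := isCompact_Icc.exists_forall_le' (hρc.mono hK)
    fun s hs => hρpos s ((half_pos hε).trans_le hs.1)
  have htail := tendsto_intervalIntegral_sub_atTop (hint.mono_set Ioi_subset_Ici_self) δ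
  filter_upwards [htail.eventually (gt_mem_nhds (mul_pos hc hδ)), eventually_ge_atTop δ]
    with t ht htδ
  by_contra! hft
  have hρf : ∀ u ∈ Icc (t - δ) t, c ≤ ρ (f u) := fun u hu => by
    have hu0 : 0 ≤ u := by linarith [hu.1]
    have := hδf u t hu0 hu.2 (by linarith [hu.1])
    exact hcρ (f u) ⟨by linarith, hfbdd u hu0⟩
  have hg : IntervalIntegrable (fun u => ρ (f u)) volume (t - δ) t :=
    (intervalIntegrable_iff_integrableOn_Icc_of_le (by linarith)).2
      (hint.mono_set fun u hu => by simp only [mem_Ici]; linarith [hu.1])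
  have := mul_sub_le_intervalIntegral (by linarith) hg hρf
  rw [sub_sub_cancel] at this
  linarith

theorem stmt4_general (ρ f : ℝ → ℝ)
    (hρc : ContinuousOn ρ (Ici 0))
    (hρpos : ∀ s > (0:ℝ), 0 < ρ s)
    (hfnn : ∀ t ≥ (0:ℝ), 0 ≤ f t)
    (hfbdd : ∃ C : ℝ, ∀ t ≥ (0:ℝ), f t ≤ C)
    (hquc : ∀ ε > (0:ℝ), ∃ δ > (0:ℝ), ∀ t₀ t : ℝ, 0 ≤ t₀ → t₀ ≤ t → t ≤ t₀ + δ →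
      f t - f t₀ < ε)
    (hint : IntegrableOn (fun t => ρ (f t)) (Ici 0)) :
    Tendsto f atTop (nhds 0) := by
  obtain ⟨C, hC⟩ := hfbdd
  refine tendsto_order.2 ⟨fun a ha => ?_, fun ε hε => ?_⟩
  · filter_upwards [eventually_ge_atTop 0] with t ht using ha.trans_le (hfnn t ht)
  · exact eventually_lt_of_integrableOn_comp ρ f hρc hρpos hC hquc hint hε

/-- Lemma 3, case: `ρ` continuous and positive definite, `f` nonnegative, bounded and
quasi-uniformly continuous, with `∫₀^∞ ρ(f t) dt < ∞`.  Then `f(t) → 0` as `t → ∞`. -/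
theorem stmt4 (ρ f : ℝ → ℝ)
    (hρc : ContinuousOn ρ (Ici 0))
    (hρ0 : ρ 0 = 0) (hρpos : ∀ s > (0:ℝ), 0 < ρ s)
    (hρnn : ∀ s ≥ (0:ℝ), 0 ≤ ρ s)
    (hfnn : ∀ t ≥ (0:ℝ), 0 ≤ f t)
    (hfbdd : ∃ C : ℝ, ∀ t ≥ (0:ℝ), f t ≤ C)
    (hquc : ∀ ε > (0:ℝ), ∃ δ > (0:ℝ), ∀ t₀ t : ℝ, 0 ≤ t₀ → t₀ ≤ t → t ≤ t₀ + δ →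
      f t - f t₀ < ε)
    (hint : IntegrableOn (fun t => ρ (f t)) (Ici 0)) :
    Tendsto f atTop (nhds 0) :=
  stmt4_general ρ f hρc hρpos hfnn hfbdd hquc hint
end

section
/- Suppose V, W : ℝ≥0 → ℝ≥0 are differentiable with V'(t) ≤ -ρ(W(t)) and W'(t) ≤ 0 for all t ≥ 0, where ρ : ℝ≥0 → ℝ≥0 is continuous and positive definite. Then for every ε > 0, if t ≥ (1 + V(0)) / min{ρ(s) : ε ≤ s ≤ ε + W(0)}, then W(t) < ε. In particular W(t) → 0, with a rate depending only on V(0), W(0), ε and ρ. -/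
/-!
Since `W` is non-increasing, as long as `W t ≥ ε` the whole trajectory `W s`, `s ∈ [0, t]`,
stays in the compact interval `[ε, W 0]`, on which the positive definite `ρ` is bounded below
by some `m > 0`. Then `V' ≤ -m` on `[0, t]`, so `0 ≤ V t ≤ V 0 - m t`, which forces
`t ≤ V 0 / m`.
-/

open Filter Set

theorem sub_le_mul_sub_of_hasDerivAt_le {f f' : ℝ → ℝ} {a b C : ℝ}
    (hf : ∀ x ∈ Icc a b, HasDerivAt f (f' x) x) (hf' : ∀ x ∈ Ioo a b, f' x ≤ C) (hab : a ≤ b) :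
    f b - f a ≤ C * (b - a) := by
  have hfd : ∀ x ∈ Ioo a b, HasDerivAt f (f' x) x := fun x hx => hf x (Ioo_subset_Icc_self hx)
  refine (convex_Icc a b).image_sub_le_mul_sub_of_deriv_le
    (fun x hx => (hf x hx).continuousAt.continuousWithinAt) ?_ ?_ a ⟨le_rfl, hab⟩ b ⟨hab, le_rfl⟩ hab
  · rw [interior_Icc]
    exact fun x hx => (hfd x hx).differentiableAt.differentiableWithinAt
  · rw [interior_Icc]
    exact fun x hx => (hfd x hx).deriv ▸ hf' x hx

theorem antitoneOn_Ici_of_hasDerivAt_nonpos {f f' : ℝ → ℝ} {a : ℝ}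
    (hf : ∀ x ≥ a, HasDerivAt f (f' x) x) (hf' : ∀ x ≥ a, f' x ≤ 0) : AntitoneOn f (Ici a) := by
  intro x hx y hy hxy
  have := sub_le_mul_sub_of_hasDerivAt_le (fun z hz => hf z (le_trans hx hz.1))
    (fun z hz => hf' z (le_trans hx hz.1.le)) hxy
  linarith

theorem sInf_image_pos_of_isCompact {ρ : ℝ → ℝ} {K : Set ℝ} (hK : IsCompact K)
    (hKne : K.Nonempty) (hρc : ContinuousOn ρ K) (hρpos : ∀ s ∈ K, 0 < ρ s) :
    0 < sInf (ρ '' K) := by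
  obtain ⟨x, hx, hρx⟩ := (hK.image_of_continuousOn hρc).sInf_mem (hKne.image ρ)
  exact hρx ▸ hρpos x hx

theorem lt_of_lyapunov_decrease {V W V' ρ : ℝ → ℝ} {ε m t : ℝ}
    (hVnn : ∀ t ≥ (0:ℝ), 0 ≤ V t) (hVd : ∀ t ≥ (0:ℝ), HasDerivAt V (V' t) t)
    (hV' : ∀ t ≥ (0:ℝ), V' t ≤ -ρ (W t)) (hW : AntitoneOn W (Ici 0))
    (hm : 0 < m) (hρm : ∀ s ∈ Icc ε (W 0), m ≤ ρ s) (ht : V 0 < m * t) : W t < ε := by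
  have ht0 : 0 ≤ t := by nlinarith [hVnn 0 le_rfl]
  by_contra! hεt
  have hWmem : ∀ s ∈ Icc 0 t, W s ∈ Icc ε (W 0) := fun s hs =>
    ⟨hεt.trans (hW hs.1 ht0 hs.2), hW (le_refl (0:ℝ)) hs.1 hs.1⟩
  have hdecay : V t - V 0 ≤ -m * (t - 0) :=
    sub_le_mul_sub_of_hasDerivAt_le (fun s hs => hVd s hs.1)
      (fun s hs => (hV' s hs.1.le).trans
        (neg_le_neg (hρm _ (hWmem s (Ioo_subset_Icc_self hs))))) ht0
  linarith [hVnn t ht0]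

theorem stmt16_general (V W V' W' ρ : ℝ → ℝ)
    (hVnn : ∀ t ≥ (0:ℝ), 0 ≤ V t) (hWnn : ∀ t ≥ (0:ℝ), 0 ≤ W t)
    (hVd : ∀ t ≥ (0:ℝ), HasDerivAt V (V' t) t)
    (hWd : ∀ t ≥ (0:ℝ), HasDerivAt W (W' t) t)
    (hρc : ContinuousOn ρ (Ici 0))
    (hρpos : ∀ s > (0:ℝ), 0 < ρ s)
    (hV' : ∀ t ≥ (0:ℝ), V' t ≤ -ρ (W t))
    (hW' : ∀ t ≥ (0:ℝ), W' t ≤ 0) :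
    (∀ ε > (0:ℝ), ∀ t : ℝ,
      t ≥ (1 + V 0) / sInf (ρ '' Icc ε (ε + W 0)) → W t < ε) ∧
    Tendsto W atTop (nhds 0) := by
  have hW : AntitoneOn W (Ici 0) := antitoneOn_Ici_of_hasDerivAt_nonpos hWd hW'
  have hbound : ∀ ε > (0:ℝ), ∀ t : ℝ,
      t ≥ (1 + V 0) / sInf (ρ '' Icc ε (ε + W 0)) → W t < ε := by
    intro ε hε t ht
    have hK : Icc ε (ε + W 0) ⊆ Ioi 0 := fun s hs => hε.trans_le hs.1
    have hρK : ContinuousOn ρ (Icc ε (ε + W 0)) := hρc.mono (hK.trans Ioi_subset_Ici_self)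
    have hm : 0 < sInf (ρ '' Icc ε (ε + W 0)) :=
      sInf_image_pos_of_isCompact isCompact_Icc ⟨ε, le_rfl, by linarith [hWnn 0 le_rfl]⟩
        hρK fun s hs => hρpos s (hK hs)
    refine lt_of_lyapunov_decrease hVnn hVd hV' hW hm
      (fun s hs => csInf_le (isCompact_Icc.bddBelow_image hρK)
        ⟨s, ⟨hs.1, by linarith [hs.2]⟩, rfl⟩) ?_
    rw [ge_iff_le, div_le_iff₀ hm] at ht
    linarith
  refine ⟨hbound, tendsto_order.2 ⟨fun a ha => ?_, fun ε hε => ?_⟩⟩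
  · filter_upwards [eventually_ge_atTop 0] with t ht using ha.trans_le (hWnn t ht)
  · filter_upwards [eventually_ge_atTop _] with t ht using hbound ε hε t ht

/-- Scalar trajectory-wise version of Theorem 1 with the explicit uniform time bound:
if `V' ≤ -ρ(W)` and `W' ≤ 0` with `ρ` continuous positive definite, then for every
`ε > 0` and every `t ≥ (1 + V 0) / min{ρ s : ε ≤ s ≤ ε + W 0}` we have `W t < ε`;
in particular `W(t) → 0`. -/
theorem stmt16 (V W V' W' ρ : ℝ → ℝ)
    (hVnn : ∀ t ≥ (0:ℝ), 0 ≤ V t) (hWnn : ∀ t ≥ (0:ℝ), 0 ≤ W t)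
    (hVd : ∀ t ≥ (0:ℝ), HasDerivAt V (V' t) t)
    (hWd : ∀ t ≥ (0:ℝ), HasDerivAt W (W' t) t)
    (hρc : ContinuousOn ρ (Ici 0))
    (hρ0 : ρ 0 = 0) (hρpos : ∀ s > (0:ℝ), 0 < ρ s)
    (hV' : ∀ t ≥ (0:ℝ), V' t ≤ -ρ (W t))
    (hW' : ∀ t ≥ (0:ℝ), W' t ≤ 0) :
    (∀ ε > (0:ℝ), ∀ t : ℝ,
      t ≥ (1 + V 0) / sInf (ρ '' Icc ε (ε + W 0)) → W t < ε) ∧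
    Tendsto W atTop (nhds 0) :=
  stmt16_general V W V' W' ρ hVnn hWnn hVd hWd hρc hρpos hV' hW'
end
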